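/- arXiv:1609.00118 — 2 statements merged into one kernel-verified Lean document; each statement's English description precedes it below -/
import Mathlib

section
/- Under conjunctivity, c^ω ; d = c^* ; d ⊓ c^∞ for all commands c, d. -/
/-- A Concurrent Refinement Algebra over a complete distributive lattice of
commands, ordered by refinement (`⊓` = nondeterministic choice, `⊥` = abort,
`⊤` = magic), with sequential composition `seq` (identity `nil`),
synchronous parallel `par`, weak conjunction `conj`, a Boolean-style
sub-lattice of atomic steps `Atomic` (with `eps` the environment-step identity
of `par`) and a sub-lattice of tests `Test`. -/
structure CRA (C : Type*) [CompleteDistribLattice C] where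
  seq : C → C → C
  par : C → C → C
  conj : C → C → C
  nil : C
  eps : C
  Atomic : C → Prop
  Test : C → Prop
  seq_assoc : ∀ a b c, seq (seq a b) c = seq a (seq b c)
  seq_nil : ∀ c, seq c nil = c
  nil_seq : ∀ c, seq nil c = c
  seq_mono_left : ∀ d : C, Monotone fun c => seq c d
  seq_mono_right : ∀ c : C, Monotone (seq c)
  top_seq : ∀ c, seq ⊤ c = ⊤
  bot_seq : ∀ c, seq ⊥ c = ⊥
  /-- sequential composition distributes over arbitrary choices on the right -/
  seq_sInf_distrib : ∀ (S : Set C) (d : C), seq (sInf S) d = ⨅ c ∈ S, seq c d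
  par_assoc : ∀ a b c, par (par a b) c = par a (par b c)
  par_comm : ∀ a b, par a b = par b a
  /-- parallel distributes over arbitrary choices -/
  par_sInf_distrib : ∀ (c : C) (S : Set C), par c (sInf S) = ⨅ d ∈ S, par c d
  nil_par_nil : par nil nil = nil
  atomic_par : ∀ a b, Atomic a → Atomic b → Atomic (par a b)
  /-- synchronous interchange law for atomic steps -/
  interchange : ∀ a b c d, Atomic a → Atomic b →
    par (seq a c) (seq b d) = seq (par a b) (par c d)
  par_atomic_seq_nil : ∀ a c, Atomic a → par (seq a c) nil = ⊤
  atomic_eps : Atomic eps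
  /-- `eps` is the identity of parallel on atomic steps -/
  eps_par_atomic : ∀ a, Atomic a → par eps a = a
  conj_assoc : ∀ a b c, conj (conj a b) c = conj a (conj b c)
  conj_comm : ∀ a b, conj a b = conj b a
  conj_idem : ∀ a, conj a a = a
  conj_bot : ∀ c, conj c ⊥ = ⊥
  conj_atomic : ∀ a b, Atomic a → Atomic b → conj a b = a ⊔ b
  conj_test : ∀ t t', Test t → Test t' → conj t t' = t ⊔ t'
  conj_interchange : ∀ a b c d, Atomic a → Atomic b →
    conj (seq a c) (seq b d) = seq (conj a b) (conj c d)
  conj_atomic_seq_nil : ∀ a c, Atomic a → conj (seq a c) nil = ⊤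
  conj_sInf_distrib : ∀ (c : C) (S : Set C), S.Nonempty →
    conj c (sInf S) = ⨅ d ∈ S, conj c d
  atomic_conj : ∀ a b, Atomic a → Atomic b → Atomic (conj a b)
  test_nil : Test nil
  test_nil_le : ∀ t, Test t → nil ≤ t
  test_seq_par_interchange : ∀ t t' c d, Test t → Test t' →
    par (seq t c) (seq t' d) = seq (t ⊔ t') (par c d)
  conj_test_interchange : ∀ t t' c d, Test t → Test t' →
    conj (seq t c) (seq t' d) = seq (t ⊔ t') (conj c d)

namespace CRA

variable {C : Type*} [CompleteDistribLattice C] (A : CRA C)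

/-- possibly infinite iteration `c^ω = μ x. nil ⊓ c;x` -/
def omega (c : C) : C :=
  OrderHom.lfp ⟨fun x => A.nil ⊓ A.seq c x,
    fun _ _ h => inf_le_inf_left _ (A.seq_mono_right c h)⟩

/-- finite iteration `c^* = ν x. nil ⊓ c;x` -/
def star (c : C) : C :=
  OrderHom.gfp ⟨fun x => A.nil ⊓ A.seq c x,
    fun _ _ h => inf_le_inf_left _ (A.seq_mono_right c h)⟩

/-- infinite iteration `c^∞ = c^ω ; ⊤` -/
def inft (c : C) : C := A.seq (A.omega c) ⊤

/-- finite powers: `c^0 = nil`, `c^(i+1) = c ; c^i` -/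
def pow (c : C) : ℕ → C
  | 0 => A.nil
  | n + 1 => A.seq c (pow c n)

end CRA

/-
`c^∞ = c^ω ; ⊤` is absorbing on the right and is the least fixpoint of `x ↦ c ; x`. For
conjunctive `c`, induction on `c^∞` with the Heyting implication `c^* ⇨ c^ω` as invariant
shows `c^* ⊓ c^∞ ≤ c^ω` (unfold `c^*` once and use conjunctivity), which gives isolation
`c^ω = c^* ⊓ c^∞`; composing with `d` on the right and absorbing `d` into `c^∞` gives the
theorem.
-/

namespace CRA

variable {C : Type*} [CompleteDistribLattice C] (A : CRA C)

theorem inf_seq (x y e : C) : A.seq (x ⊓ y) e = A.seq x e ⊓ A.seq y e := by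
  simpa only [sInf_pair, iInf_pair] using A.seq_sInf_distrib {x, y} e

theorem seq_mono {a b x y : C} (hab : a ≤ b) (hxy : x ≤ y) : A.seq a x ≤ A.seq b y :=
  (A.seq_mono_left x hab).trans (A.seq_mono_right b hxy)

theorem omega_unfold (c : C) : A.nil ⊓ A.seq c (A.omega c) = A.omega c :=
  OrderHom.map_lfp ⟨fun x => A.nil ⊓ A.seq c x, _⟩

theorem star_unfold (c : C) : A.nil ⊓ A.seq c (A.star c) = A.star c :=
  OrderHom.map_gfp ⟨fun x => A.nil ⊓ A.seq c x, _⟩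

theorem omega_le_of_le {c x : C} (h : A.nil ⊓ A.seq c x ≤ x) : A.omega c ≤ x :=
  OrderHom.lfp_le _ h

theorem omega_le_star (c : C) : A.omega c ≤ A.star c :=
  A.omega_le_of_le (A.star_unfold c).le

theorem omega_le_inft (c : C) : A.omega c ≤ A.inft c :=
  (A.seq_nil _).ge.trans (A.seq_mono_right _ le_top)

theorem inft_seq (c e : C) : A.seq (A.inft c) e = A.inft c := by
  rw [inft, A.seq_assoc, A.top_seq]

def seqHom (c : C) : C →o C := ⟨A.seq c, A.seq_mono_right c⟩

theorem lfp_seqHom_seq (c e : C) :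
    A.seq (OrderHom.lfp (A.seqHom c)) e = OrderHom.lfp (A.seqHom c) := by
  set L := OrderHom.lfp (A.seqHom c)
  have hL : A.seq c L = L := OrderHom.map_lfp (A.seqHom c)
  have le_seq : ∀ e, L ≤ A.seq L e := fun e =>
    OrderHom.lfp_le _ (by show A.seq c (A.seq L e) ≤ A.seq L e; rw [← A.seq_assoc, hL])
  refine le_antisymm ?_ (le_seq e)
  calc A.seq L e ≤ A.seq (A.seq L ⊥) ⊤ := A.seq_mono (le_seq ⊥) le_top
    _ = A.seq L ⊥ := by rw [A.seq_assoc, A.bot_seq]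
    _ ≤ A.seq L A.nil := A.seq_mono_right L bot_le
    _ = L := A.seq_nil L

theorem inft_eq_lfp_seqHom (c : C) : A.inft c = OrderHom.lfp (A.seqHom c) := by
  refine le_antisymm ?_ (OrderHom.lfp_le _ ?_)
  · have hω : A.omega c ≤ OrderHom.lfp (A.seqHom c) :=
      A.omega_le_of_le (inf_le_right.trans (OrderHom.map_lfp (A.seqHom c)).le)
    exact (A.seq_mono_left ⊤ hω).trans (A.lfp_seqHom_seq c ⊤).le
  · show A.seq c (A.seq (A.omega c) ⊤) ≤ A.seq (A.omega c) ⊤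
    nth_rw 2 [← A.omega_unfold c]
    rw [A.inf_seq, A.nil_seq, top_inf_eq, A.seq_assoc]

theorem inft_le_of_seq_le {c r : C} (h : A.seq c r ≤ r) : A.inft c ≤ r :=
  A.inft_eq_lfp_seqHom c ▸ OrderHom.lfp_le _ h

theorem omega_eq_star_inf_inft {c : C} (hc : ∀ x y, A.seq c (x ⊓ y) = A.seq c x ⊓ A.seq c y) :
    A.omega c = A.star c ⊓ A.inft c := by
  refine le_antisymm (le_inf (A.omega_le_star c) (A.omega_le_inft c)) ?_
  suffices A.inft c ≤ A.star c ⇨ A.omega c from le_himp_iff'.mp this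
  refine A.inft_le_of_seq_le (le_himp_iff'.mpr ?_)
  calc A.star c ⊓ A.seq c (A.star c ⇨ A.omega c)
      = A.nil ⊓ A.seq c (A.star c ⊓ (A.star c ⇨ A.omega c)) := by
        rw [hc, ← inf_assoc, star_unfold]
    _ ≤ A.nil ⊓ A.seq c (A.omega c) := inf_le_inf_left _ (A.seq_mono_right c inf_himp_le)
    _ = A.omega c := A.omega_unfold c

end CRA

theorem omega_seq {C : Type*} [CompleteDistribLattice C] (A : CRA C)
    (hconj : ∀ (c : C) (S : Set C), S.Nonempty → A.seq c (sInf S) = ⨅ d ∈ S, A.seq c d) (c d : C) :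
    A.seq (A.omega c) d = A.seq (A.star c) d ⊓ A.inft c := by
  have hc : ∀ x y, A.seq c (x ⊓ y) = A.seq c x ⊓ A.seq c y := fun x y => by
    simpa only [sInf_pair, iInf_pair] using hconj c {x, y} (Set.insert_nonempty x {y})
  rw [A.omega_eq_star_inf_inft hc, A.inf_seq, A.inft_seq]
end

section
/- For atomic steps a, b and command c, under the synchronous interchange axiom and conjunctivity: a^*;c ∥ b^∞ = (a∥b)^* ; (c ∥ b^∞). -/
/-!
Conjunctivity makes the greatest fixed point `c^*` the meet `⨅ i, c^i` of the finite powers.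
Both sides then distribute over that meet, and for each `i` the identity
`a^i;c ∥ b^∞ = a^i;c ∥ b^i;b^∞ = (a∥b)^i;(c ∥ b^∞)` is the interchange law applied `i` times.
-/

namespace CRA

variable {C : Type*} [CompleteDistribLattice C] (A : CRA C)

lemma seq_inf_left (x y d : C) : A.seq (x ⊓ y) d = A.seq x d ⊓ A.seq y d := by
  simpa only [sInf_insert, sInf_singleton, iInf_insert, iInf_singleton] using
    A.seq_sInf_distrib {x, y} d

lemma seq_iInf_left {ι : Sort*} (f : ι → C) (d : C) :
    A.seq (⨅ i, f i) d = ⨅ i, A.seq (f i) d := by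
  simpa only [sInf_range, iInf_range] using A.seq_sInf_distrib (Set.range f) d

lemma par_iInf {ι : Sort*} (c : C) (f : ι → C) :
    A.par c (⨅ i, f i) = ⨅ i, A.par c (f i) := by
  simpa only [sInf_range, iInf_range] using A.par_sInf_distrib c (Set.range f)

lemma star_eq (c : C) : A.star c = A.nil ⊓ A.seq c (A.star c) :=
  (OrderHom.map_gfp _).symm

lemma omega_eq (c : C) : A.omega c = A.nil ⊓ A.seq c (A.omega c) :=
  (OrderHom.map_lfp _).symm

lemma pow_succ (c : C) (i : ℕ) : A.pow c (i + 1) = A.seq c (A.pow c i) := rfl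

lemma star_le_pow (c : C) (i : ℕ) : A.star c ≤ A.pow c i := by
  induction i with
  | zero => exact (A.star_eq c).trans_le inf_le_left
  | succ i ih =>
    calc A.star c ≤ A.seq c (A.star c) := (A.star_eq c).trans_le inf_le_right
      _ ≤ A.pow c (i + 1) := A.seq_mono_right c ih

lemma star_eq_iInf_pow (c : C)
    (hc : ∀ f : ℕ → C, A.seq c (⨅ i, f i) = ⨅ i, A.seq c (f i)) :
    A.star c = ⨅ i, A.pow c i := by
  refine le_antisymm (le_iInf (A.star_le_pow c)) (OrderHom.le_gfp _ ?_)
  change (⨅ i, A.pow c i) ≤ A.nil ⊓ A.seq c (⨅ i, A.pow c i)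
  rw [hc]
  exact le_inf (iInf_le _ 0) (le_iInf fun i => iInf_le _ (i + 1))

lemma inft_eq_seq_inft (b : C) : A.inft b = A.seq b (A.inft b) :=
  calc A.inft b = A.seq (A.nil ⊓ A.seq b (A.omega b)) ⊤ := by rw [inft, ← omega_eq]
    _ = A.seq b (A.inft b) := by rw [seq_inf_left, A.nil_seq, top_inf_eq, A.seq_assoc, inft]

lemma inft_eq_pow_seq_inft (b : C) (i : ℕ) : A.inft b = A.seq (A.pow b i) (A.inft b) := by
  induction i with
  | zero => exact (A.nil_seq _).symm
  | succ i ih => rw [pow_succ, A.seq_assoc, ← ih, ← inft_eq_seq_inft]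

lemma par_pow_seq_pow_seq {a b : C} (ha : A.Atomic a) (hb : A.Atomic b) (i : ℕ) (c d : C) :
    A.par (A.seq (A.pow a i) c) (A.seq (A.pow b i) d) =
      A.seq (A.pow (A.par a b) i) (A.par c d) := by
  induction i generalizing c d with
  | zero => simp only [pow, A.nil_seq]
  | succ i ih =>
    rw [pow_succ, pow_succ, pow_succ, A.seq_assoc, A.seq_assoc, A.interchange _ _ _ _ ha hb, ih,
      A.seq_assoc]

end CRA

theorem atomic_iteration_finite_infinite {C : Type*} [CompleteDistribLattice C] (A : CRA C)
    (hconj : ∀ (c : C) (S : Set C), S.Nonempty → A.seq c (sInf S) = ⨅ d ∈ S, A.seq c d) (a b c : C) (ha : A.Atomic a) (hb : A.Atomic b) :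
    A.par (A.seq (A.star a) c) (A.inft b) =
      A.seq (A.star (A.par a b)) (A.par c (A.inft b)) := by
  have hstar (e : C) : A.star e = ⨅ i, A.pow e i :=
    A.star_eq_iInf_pow e fun f => by
      simpa only [sInf_range, iInf_range] using hconj e (Set.range f) (Set.range_nonempty f)
  rw [hstar, hstar, A.seq_iInf_left, A.par_comm, A.par_iInf,
    A.seq_iInf_left]
  refine iInf_congr fun i => ?_
  rw [A.par_comm, A.inft_eq_pow_seq_inft b i, A.par_pow_seq_pow_seq ha hb, ← A.inft_eq_pow_seq_inft]
end
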